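/- Fix an integer l ≥ 2, cutoffs −∞ = Δ_0 < Δ_1 < ⋯ < Δ_{l−1} < Δ_l = +∞, and Δ_b ∈ ℝ. Define for ρ ∈ (−1, 1): F_ob(ρ) = 2·Σ_{r=1}^{l−1} [Φ_2(Δ_r, Δ_b; ρ)·Φ(Δ_{r+1}) − Φ(Δ_r)·Φ_2(Δ_{r+1}, Δ_b; ρ)], with the conventions Φ(+∞) = 1 and Φ_2(+∞, b; ρ) = Φ(b). Then F_ob is strictly increasing on (−1, 1): for ρ_1 < ρ_2 in (−1, 1), F_ob(ρ_1) < F_ob(ρ_2). (Invertibility of the ordinal–binary bridging function, from Theorem 2.) -/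

import Mathlib

open MeasureTheory ProbabilityTheory Real Matrix

noncomputable section

/-- Density of a centered multivariate Gaussian distribution on `ℝ^d`
with covariance matrix `S`. -/
def mvGaussPDF {d : ℕ} (S : Matrix (Fin d) (Fin d) ℝ) (x : Fin d → ℝ) : ℝ :=
  (Real.sqrt ((2 * Real.pi) ^ d * S.det))⁻¹ * Real.exp (-(x ⬝ᵥ S⁻¹ *ᵥ x) / 2)

/-- Centered multivariate Gaussian measure on `ℝ^d` with covariance matrix `S`. -/
def mvGauss {d : ℕ} (S : Matrix (Fin d) (Fin d) ℝ) : Measure (Fin d → ℝ) :=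
  MeasureTheory.volume.withDensity fun x => ENNReal.ofReal (mvGaussPDF S x)

/-- `Φ_d(a; S) = P(U₁ ≤ a₁, …, U_d ≤ a_d)` for a centered Gaussian vector `U` with
covariance matrix `S`.  Extended-real bounds implement the conventions that a `+∞`
bound drops the corresponding constraint, while a `-∞` bound gives probability `0`. -/
def PhiVec {d : ℕ} (a : Fin d → EReal) (S : Matrix (Fin d) (Fin d) ℝ) : ℝ :=
  (mvGauss S {x | ∀ i, (x i : EReal) ≤ a i}).toReal

/-- Standard normal CDF `Φ`, with extended-real argument (`Φ(+∞) = 1`, `Φ(-∞) = 0`). -/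
def stdPhi (a : EReal) : ℝ :=
  (gaussianReal 0 1 {x : ℝ | (x : EReal) ≤ a}).toReal

/-- The `2 × 2` correlation matrix with correlation `ρ`. -/
def corrMat (ρ : ℝ) : Matrix (Fin 2) (Fin 2) ℝ := !![1, ρ; ρ, 1]

/-- Bivariate standard normal CDF `Φ₂(a, b; ρ)` with extended-real bounds. -/
def Phi2 (a b : EReal) (ρ : ℝ) : ℝ := PhiVec ![a, b] (corrMat ρ)

/-- The binary variable `1{z > Δ}` obtained by dichotomizing a latent variable `z`. -/
def binVar (Δ : ℝ) (z : ℝ) : ℝ := if Δ < z then 1 else 0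

/-- The truncated variable `z · 1{z > Δ}` obtained by truncating a latent variable `z`. -/
def truncVar (Δ : ℝ) (z : ℝ) : ℝ := if Δ < z then z else 0

/-- The ordinal variable `∑_{m=0}^{l-1} m · 1{Δ_m ≤ z < Δ_{m+1}}` obtained from a latent
variable `z` via extended-real cutoffs `Δ`. -/
def ordVar (l : ℕ) (Δ : ℕ → EReal) (z : ℝ) : ℝ :=
  ∑ m ∈ Finset.range l,
    (m : ℝ) * (if Δ m ≤ (z : EReal) ∧ (z : EReal) < Δ (m + 1) then 1 else 0)

/-!
Summation by parts, using `Φ(Δ₀) = 0` and `Φ₂(Δ_l, Δ_b; ρ) = Φ(Δ_b)`, rewrites `F_ob(ρ) / 2` as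
`∑_{r=1}^{l-1} Φ₂(Δ_r, Δ_b; ρ) (Φ(Δ_{r+1}) - Φ(Δ_{r-1})) - Φ(Δ_{l-1}) Φ(Δ_b)`, whose weights are
positive. For finite `a`, `ρ ↦ Φ₂(a, b; ρ)` is strictly increasing by Plackett's identity
`∂Φ₂/∂ρ = φ₂(a, b; ρ) > 0`. To prove it, condition on the first coordinate:
`Φ₂(a, b; ρ) = ∫_{x ≤ a} φ(x) Φ((b - ρx)/√(1-ρ²)) dx`; the `ρ`-derivative of the integrand is the
`x`-derivative of `φ₂(x, b; ρ)`, so differentiating under the integral sign leaves `φ₂(a, b; ρ)`.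
-/

open Set Filter Topology
open scoped NNReal

def normalPDF (x : ℝ) : ℝ := gaussianPDFReal 0 1 x

def normalCDF (t : ℝ) : ℝ := ∫ x in Iic t, normalPDF x

lemma normalPDF_eq (x : ℝ) : normalPDF x = (√(2 * π))⁻¹ * exp (-x ^ 2 / 2) := by
  simp [normalPDF, gaussianPDFReal]

lemma normalPDF_pos (x : ℝ) : 0 < normalPDF x := gaussianPDFReal_pos _ _ _ one_ne_zero

lemma normalPDF_le_one (x : ℝ) : normalPDF x ≤ 1 := by
  have hexp : exp (-x ^ 2 / 2) ≤ 1 := exp_le_one_iff.2 (by nlinarith [sq_nonneg x])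
  have hsqrt : 1 ≤ √(2 * π) := one_le_sqrt.2 (by nlinarith [pi_gt_three])
  rw [normalPDF_eq]
  calc (√(2 * π))⁻¹ * exp (-x ^ 2 / 2) ≤ 1 * 1 :=
        mul_le_mul (inv_le_one_of_one_le₀ hsqrt) hexp (exp_pos _).le zero_le_one
    _ = 1 := one_mul 1

lemma continuous_normalPDF : Continuous normalPDF := by
  rw [funext normalPDF_eq]; fun_prop

lemma integrable_normalPDF : Integrable normalPDF := integrable_gaussianPDFReal 0 1

lemma integrable_normalPDF_mul_abs : Integrable fun x => normalPDF x * |x| := by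
  refine (((integrable_mul_exp_neg_mul_sq (by norm_num : (0:ℝ) < 1 / 2)).abs).const_mul
    (√(2 * π))⁻¹).congr (Eventually.of_forall fun x => ?_)
  dsimp only
  rw [normalPDF_eq, abs_mul, abs_of_pos (exp_pos _)]
  ring_nf

lemma integrable_normalPDF_mul_abs_add_abs (b c : ℝ) :
    Integrable fun x => normalPDF x * ((|b| + |x|) / c) :=
  ((integrable_normalPDF.mul_const |b|).add integrable_normalPDF_mul_abs).div_const c |>.congr
    (Eventually.of_forall fun x => by simp only [Pi.add_apply]; ring)

lemma hasDerivAt_normalPDF (x : ℝ) : HasDerivAt normalPDF (-x * normalPDF x) x := by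
  have hexp : HasDerivAt (fun u : ℝ => -u ^ 2 / 2) (-x) x :=
    (((hasDerivAt_pow 2 x).neg).div_const 2).congr_deriv (by norm_num; ring)
  rw [funext normalPDF_eq]
  exact ((hexp.exp).const_mul _).congr_deriv (by ring)

lemma tendsto_normalPDF_atBot : Tendsto normalPDF atBot (𝓝 0) := by
  have hle : ∀ᶠ x in atBot, normalPDF x ≤ (√(2 * π))⁻¹ * exp x := by
    filter_upwards [eventually_le_atBot (-2 : ℝ)] with x hx
    rw [normalPDF_eq]
    gcongr
    nlinarith
  have hexp : Tendsto (fun x => (√(2 * π))⁻¹ * exp x) atBot (𝓝 0) := by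
    simpa using tendsto_exp_atBot.const_mul (√(2 * π))⁻¹
  exact tendsto_of_tendsto_of_tendsto_of_le_of_le' tendsto_const_nhds hexp
    (Eventually.of_forall fun x => (normalPDF_pos x).le) hle

lemma normalCDF_nonneg (t : ℝ) : 0 ≤ normalCDF t :=
  setIntegral_nonneg measurableSet_Iic fun x _ => (normalPDF_pos x).le

lemma normalCDF_le_one (t : ℝ) : normalCDF t ≤ 1 := by
  calc normalCDF t ≤ ∫ x, normalPDF x :=
        setIntegral_le_integral integrable_normalPDF
          (Eventually.of_forall fun x => (normalPDF_pos x).le)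
    _ = 1 := integral_gaussianPDFReal_eq_one 0 one_ne_zero

lemma normalCDF_sub_normalCDF (a b : ℝ) :
    normalCDF b - normalCDF a = ∫ x in a..b, normalPDF x :=
  intervalIntegral.integral_Iic_sub_Iic integrable_normalPDF.integrableOn
    integrable_normalPDF.integrableOn

lemma normalCDF_strictMono : StrictMono normalCDF := fun a b hab => by
  have := intervalIntegral.intervalIntegral_pos_of_pos integrable_normalPDF.intervalIntegrable
    normalPDF_pos hab
  linarith [normalCDF_sub_normalCDF a b]

lemma hasDerivAt_normalCDF (t : ℝ) : HasDerivAt normalCDF (normalPDF t) t := by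
  have h : normalCDF = fun u => (∫ x in (0:ℝ)..u, normalPDF x) + normalCDF 0 := by
    funext u; linarith [normalCDF_sub_normalCDF 0 u]
  rw [h]
  exact (intervalIntegral.integral_hasDerivAt_right integrable_normalPDF.intervalIntegrable
    continuous_normalPDF.stronglyMeasurable.stronglyMeasurableAtFilter
    continuous_normalPDF.continuousAt).add_const _

lemma continuous_normalCDF : Continuous normalCDF :=
  continuous_iff_continuousAt.2 fun t => (hasDerivAt_normalCDF t).continuousAt

lemma integral_Iic_gaussianPDFReal (m : ℝ) {v : ℝ≥0} (hv : v ≠ 0) (b : ℝ) :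
    ∫ y in Iic b, gaussianPDFReal m v y = normalCDF ((b - m) / √v) := by
  have hsqrt : 0 < √(v : ℝ) := sqrt_pos.2 (by positivity)
  have hstd : (gaussianReal 0 1).map (fun x => √(v : ℝ) * x + m) = gaussianReal m v := by
    have hvar : NNReal.mk (√(v : ℝ) ^ 2) (sq_nonneg _) * 1 = v := by
      ext; simp [sq_sqrt v.coe_nonneg]
    rw [show (fun x => √(v : ℝ) * x + m) = (· + m) ∘ (√(v : ℝ) * ·) from rfl,
      ← Measure.map_map (measurable_add_const m) (measurable_const_mul _),
      gaussianReal_map_const_mul, hvar, gaussianReal_map_add_const, mul_zero, zero_add]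
  have hpre : (fun x => √(v : ℝ) * x + m) ⁻¹' Iic b = Iic ((b - m) / √v) := by
    ext x; simp [le_div_iff₀ hsqrt, mul_comm, le_sub_iff_add_le]
  have hmeas : gaussianReal m v (Iic b) = gaussianReal 0 1 (Iic ((b - m) / √v)) := by
    rw [← hstd, Measure.map_apply (by fun_prop) measurableSet_Iic, hpre]
  rw [gaussianReal_apply_eq_integral m hv, gaussianReal_apply_eq_integral 0 one_ne_zero] at hmeas
  exact (ENNReal.ofReal_eq_ofReal_iff
    (setIntegral_nonneg measurableSet_Iic fun y _ => gaussianPDFReal_nonneg _ _ _)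
    (normalCDF_nonneg _)).1 hmeas

lemma stdPhi_coe (t : ℝ) : stdPhi t = normalCDF t := by
  have hset : {x : ℝ | (x : EReal) ≤ t} = Iic t := by ext; simp
  rw [stdPhi, hset, gaussianReal_apply_eq_integral 0 one_ne_zero]
  exact ENNReal.toReal_ofReal (normalCDF_nonneg t)

lemma stdPhi_bot : stdPhi ⊥ = 0 := by
  simp [stdPhi]

lemma stdPhi_mono : Monotone stdPhi := fun _ _ hab =>
  ENNReal.toReal_mono (measure_ne_top _ _) (measure_mono fun _ hx => le_trans hx hab)

lemma stdPhi_strictMono : StrictMono stdPhi := by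
  intro a b hab
  obtain ⟨s, has, hsb⟩ := EReal.lt_iff_exists_real_btwn.1 hab
  obtain ⟨t, hst, htb⟩ := EReal.lt_iff_exists_real_btwn.1 hsb
  calc stdPhi a ≤ stdPhi s := stdPhi_mono has.le
    _ = normalCDF s := stdPhi_coe s
    _ < normalCDF t := normalCDF_strictMono (EReal.coe_lt_coe_iff.1 hst)
    _ = stdPhi t := (stdPhi_coe t).symm
    _ ≤ stdPhi b := stdPhi_mono htb.le

lemma corrMat_det (ρ : ℝ) : (corrMat ρ).det = 1 - ρ ^ 2 := by
  rw [corrMat, Matrix.det_fin_two_of]; ring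

lemma corrMat_inv (ρ : ℝ) : (corrMat ρ)⁻¹ = (1 - ρ ^ 2)⁻¹ • !![1, -ρ; -ρ, 1] := by
  rw [Matrix.inv_def, corrMat_det, Ring.inverse_eq_inv', corrMat, Matrix.adjugate_fin_two_of]

lemma corrMat_inv_quadForm (ρ x y : ℝ) :
    ![x, y] ⬝ᵥ (corrMat ρ)⁻¹ *ᵥ ![x, y] = (x ^ 2 - 2 * ρ * x * y + y ^ 2) / (1 - ρ ^ 2) := by
  rw [corrMat_inv]
  simp [Matrix.mulVec, dotProduct, Fin.sum_univ_two]
  ring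

lemma mvGaussPDF_corrMat_comm (ρ x y : ℝ) :
    mvGaussPDF (corrMat ρ) ![x, y] = mvGaussPDF (corrMat ρ) ![y, x] := by
  simp only [mvGaussPDF, corrMat_inv_quadForm]
  ring_nf

/-- The conditional variance of `U₂` given `U₁`. -/
def residualVar (ρ : ℝ) : ℝ≥0 := (1 - ρ ^ 2).toNNReal

/-- The density of `(U₁, U₂)`, factored as the density of `U₁` times that of `U₂` given `U₁`. -/
def bivariatePDF (ρ : ℝ) (q : ℝ × ℝ) : ℝ :=
  normalPDF q.1 * gaussianPDFReal (ρ * q.1) (residualVar ρ) q.2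

lemma bivariatePDF_nonneg (ρ : ℝ) (q : ℝ × ℝ) : 0 ≤ bivariatePDF ρ q :=
  mul_nonneg (normalPDF_pos _).le (gaussianPDFReal_nonneg _ _ _)

lemma continuous_bivariatePDF (ρ : ℝ) : Continuous (bivariatePDF ρ) := by
  have : Continuous fun q : ℝ × ℝ => gaussianPDFReal (ρ * q.1) (residualVar ρ) q.2 := by
    unfold gaussianPDFReal; fun_prop
  exact (continuous_normalPDF.comp continuous_fst).mul this

/-- `Φ(condArg b ρ x) = P(U₂ ≤ b | U₁ = x)`. -/
def condArg (b ρ x : ℝ) : ℝ := (b - ρ * x) / √(1 - ρ ^ 2)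

/-- Both the `ρ`-derivative of `φ(x) Φ(condArg b ρ x)` and the `x`-derivative of `φ₂(x, b; ρ)`. -/
def derivIntegrand (b ρ x : ℝ) : ℝ :=
  normalPDF x * (normalPDF (condArg b ρ x) * ((ρ * b - x) / √(1 - ρ ^ 2) ^ 3))

lemma continuous_condArg (b ρ : ℝ) : Continuous (condArg b ρ) := by
  unfold condArg; fun_prop

lemma continuous_derivIntegrand (b ρ : ℝ) : Continuous (derivIntegrand b ρ) := by
  unfold derivIntegrand
  exact continuous_normalPDF.mul
    ((continuous_normalPDF.comp (continuous_condArg b ρ)).mul (by fun_prop))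

lemma one_sub_abs_le_sqrt_one_sub_sq {ρ : ℝ} (hρ : |ρ| ≤ 1) : 1 - |ρ| ≤ √(1 - ρ ^ 2) :=
  Real.le_sqrt_of_sq_le (by nlinarith [sq_abs ρ, abs_nonneg ρ])

section Correlation

variable {ρ : ℝ} (hρ : ρ ∈ Ioo (-1 : ℝ) 1)
include hρ

lemma one_sub_sq_pos : 0 < 1 - ρ ^ 2 := by
  nlinarith [hρ.1, hρ.2]

lemma sqrt_one_sub_sq_pos : 0 < √(1 - ρ ^ 2) := sqrt_pos.2 (one_sub_sq_pos hρ)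

lemma coe_residualVar : (residualVar ρ : ℝ) = 1 - ρ ^ 2 :=
  Real.coe_toNNReal _ (one_sub_sq_pos hρ).le

lemma residualVar_ne_zero : residualVar ρ ≠ 0 := by
  simpa [residualVar] using one_sub_sq_pos hρ

lemma mvGaussPDF_corrMat (x y : ℝ) :
    mvGaussPDF (corrMat ρ) ![x, y] = bivariatePDF ρ (x, y) := by
  have hvar := one_sub_sq_pos hρ
  have hexp : -((x ^ 2 - 2 * ρ * x * y + y ^ 2) / (1 - ρ ^ 2)) / 2
      = -x ^ 2 / 2 + -(y - ρ * x) ^ 2 / (2 * (1 - ρ ^ 2)) := by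
    field_simp; ring
  have hsqrt : √((2 * π) ^ 2 * (1 - ρ ^ 2)) = √(2 * π) * √(2 * π * (1 - ρ ^ 2)) := by
    rw [← sqrt_mul (by positivity)]; ring_nf
  rw [mvGaussPDF, corrMat_det, corrMat_inv_quadForm, hexp, exp_add, bivariatePDF, normalPDF_eq,
    gaussianPDFReal, coe_residualVar hρ, hsqrt, mul_inv]
  ring

lemma bivariatePDF_eq (x y : ℝ) :
    bivariatePDF ρ (x, y) = normalPDF x * normalPDF (condArg y ρ x) / √(1 - ρ ^ 2) := by
  have hs := sqrt_one_sub_sq_pos hρ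
  have hs2 : √(1 - ρ ^ 2) ^ 2 = 1 - ρ ^ 2 := sq_sqrt (one_sub_sq_pos hρ).le
  rw [bivariatePDF, gaussianPDFReal, coe_residualVar hρ, normalPDF_eq (condArg y ρ x), condArg,
    sqrt_mul (by positivity), div_pow, hs2]
  field_simp

lemma bivariatePDF_pos (q : ℝ × ℝ) : 0 < bivariatePDF ρ q :=
  mul_pos (normalPDF_pos _) (gaussianPDFReal_pos _ _ _ (residualVar_ne_zero hρ))

lemma integrable_bivariatePDF : Integrable (bivariatePDF ρ) := by
  rw [Measure.volume_eq_prod, integrable_prod_iff (continuous_bivariatePDF ρ).aestronglyMeasurable]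
  refine ⟨Eventually.of_forall fun x =>
    (integrable_gaussianPDFReal (ρ * x) (residualVar ρ)).const_mul (normalPDF x), ?_⟩
  refine integrable_normalPDF.congr (Eventually.of_forall fun x => ?_)
  simp only [bivariatePDF, norm_mul, Real.norm_of_nonneg (normalPDF_pos _).le,
    Real.norm_of_nonneg (gaussianPDFReal_nonneg _ _ _), integral_const_mul,
    integral_gaussianPDFReal_eq_one _ (residualVar_ne_zero hρ), mul_one]

lemma mvGauss_corrMat_preimage_prod (E : (Fin 2 → ℝ) ≃ᵐ ℝ × ℝ)
    (hE : MeasurePreserving E) (hpdf : ∀ z, mvGaussPDF (corrMat ρ) z = bivariatePDF ρ (E z))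
    {s t : Set ℝ} (hs : MeasurableSet s) (ht : MeasurableSet t) :
    (mvGauss (corrMat ρ) (E ⁻¹' s ×ˢ t)).toReal
      = ∫ x in s, normalPDF x * ∫ y in t, gaussianPDFReal (ρ * x) (residualVar ρ) y := by
  have hst : MeasurableSet (s ×ˢ t) := hs.prod ht
  have hrestr : MeasurePreserving E (volume.restrict (E ⁻¹' s ×ˢ t)) (volume.restrict (s ×ˢ t)) :=
    hE.restrict_preimage_emb E.measurableEmbedding _
  have hlin : mvGauss (corrMat ρ) (E ⁻¹' s ×ˢ t)
      = ∫⁻ q in s ×ˢ t, ENNReal.ofReal (bivariatePDF ρ q) := by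
    rw [mvGauss, withDensity_apply _ (hst.preimage E.measurable),
      ← hrestr.lintegral_comp (continuous_bivariatePDF ρ).measurable.ennreal_ofReal]
    simp only [hpdf]
  rw [hlin, ← ofReal_integral_eq_lintegral_ofReal (integrable_bivariatePDF hρ).integrableOn
      (Eventually.of_forall (bivariatePDF_nonneg ρ)),
    ENNReal.toReal_ofReal (setIntegral_nonneg hst fun q _ => bivariatePDF_nonneg ρ q),
    Measure.volume_eq_prod, setIntegral_prod _
      (by rw [← Measure.volume_eq_prod]; exact (integrable_bivariatePDF hρ).integrableOn)]
  simp only [bivariatePDF, integral_const_mul]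

lemma Phi2_coe_coe (a b : ℝ) :
    Phi2 a b ρ = ∫ x in Iic a, normalPDF x * normalCDF (condArg b ρ x) := by
  have hset : {z : Fin 2 → ℝ | ∀ i, (z i : EReal) ≤ ![(a : EReal), (b : EReal)] i}
      = MeasurableEquiv.piFinTwo (fun _ => ℝ) ⁻¹' Iic a ×ˢ Iic b := by
    ext z; simp [Fin.forall_fin_two, MeasurableEquiv.piFinTwo]
  have hpdf (z : Fin 2 → ℝ) :
      mvGaussPDF (corrMat ρ) z = bivariatePDF ρ (MeasurableEquiv.piFinTwo (fun _ => ℝ) z) := by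
    rw [show z = ![z 0, z 1] from (FinVec.etaExpand_eq z).symm, mvGaussPDF_corrMat hρ]
    rfl
  rw [Phi2, PhiVec, hset, mvGauss_corrMat_preimage_prod hρ _ (volume_preserving_piFinTwo _)
    hpdf measurableSet_Iic measurableSet_Iic]
  simp only [integral_Iic_gaussianPDFReal _ (residualVar_ne_zero hρ), coe_residualVar hρ, condArg]

lemma Phi2_top_left (b : ℝ) : Phi2 ⊤ b ρ = normalCDF b := by
  let E : (Fin 2 → ℝ) ≃ᵐ ℝ × ℝ :=
    (MeasurableEquiv.piFinTwo fun _ => ℝ).trans MeasurableEquiv.prodComm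
  have hE : MeasurePreserving E :=
    (Measure.volume_eq_prod (α := ℝ) (β := ℝ) ▸ Measure.measurePreserving_swap).comp
      (volume_preserving_piFinTwo _)
  have hset : {z : Fin 2 → ℝ | ∀ i, (z i : EReal) ≤ ![(⊤ : EReal), (b : EReal)] i}
      = E ⁻¹' Iic b ×ˢ univ := by
    ext z; simp [Fin.forall_fin_two, E, MeasurableEquiv.piFinTwo, MeasurableEquiv.prodComm]
  have hpdf (z : Fin 2 → ℝ) : mvGaussPDF (corrMat ρ) z = bivariatePDF ρ (E z) := by
    rw [show z = ![z 0, z 1] from (FinVec.etaExpand_eq z).symm, mvGaussPDF_corrMat_comm,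
      mvGaussPDF_corrMat hρ]
    rfl
  rw [Phi2, PhiVec, hset, mvGauss_corrMat_preimage_prod hρ E hE hpdf measurableSet_Iic
    MeasurableSet.univ]
  simp only [Measure.restrict_univ, integral_gaussianPDFReal_eq_one _ (residualVar_ne_zero hρ),
    mul_one]
  rfl

lemma hasDerivAt_condArg_rho (b x : ℝ) :
    HasDerivAt (fun ρ => condArg b ρ x) ((ρ * b - x) / √(1 - ρ ^ 2) ^ 3) ρ := by
  have hs := sqrt_one_sub_sq_pos hρ
  have hs2 : √(1 - ρ ^ 2) ^ 2 = 1 - ρ ^ 2 := sq_sqrt (one_sub_sq_pos hρ).le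
  have hnum : HasDerivAt (fun ρ : ℝ => b - ρ * x) (-x) ρ := by
    simpa using ((hasDerivAt_id ρ).mul_const x).const_sub b
  have hden : HasDerivAt (fun ρ : ℝ => √(1 - ρ ^ 2)) (-(2 * ρ) / (2 * √(1 - ρ ^ 2))) ρ :=
    (((hasDerivAt_pow 2 ρ).const_sub 1).congr_deriv (by ring)).sqrt (one_sub_sq_pos hρ).ne'
  refine (hnum.div hden hs.ne').congr_deriv ?_
  field_simp
  linear_combination (-x) * hs2

lemma hasDerivAt_normalPDF_mul_normalCDF_condArg (b x : ℝ) :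
    HasDerivAt (fun ρ => normalPDF x * normalCDF (condArg b ρ x)) (derivIntegrand b ρ x) ρ :=
  ((hasDerivAt_normalCDF _).comp ρ (hasDerivAt_condArg_rho hρ b x)).const_mul _

lemma hasDerivAt_bivariatePDF_fst (b x : ℝ) :
    HasDerivAt (fun x => bivariatePDF ρ (x, b)) (derivIntegrand b ρ x) x := by
  have hs := sqrt_one_sub_sq_pos hρ
  have hs2 : √(1 - ρ ^ 2) ^ 2 = 1 - ρ ^ 2 := sq_sqrt (one_sub_sq_pos hρ).le
  have harg : HasDerivAt (condArg b ρ) (-ρ / √(1 - ρ ^ 2)) x :=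
    ((((hasDerivAt_id x).const_mul ρ).const_sub b).div_const _).congr_deriv (by simp)
  have hcond : condArg b ρ x * √(1 - ρ ^ 2) = b - ρ * x := by
    rw [condArg]; field_simp
  rw [funext fun x => bivariatePDF_eq hρ x b]
  refine (((hasDerivAt_normalPDF x).mul
    ((hasDerivAt_normalPDF _).comp x harg)).div_const _).congr_deriv ?_
  simp only [derivIntegrand, Function.comp_apply]
  set G := condArg b ρ x
  field_simp
  linear_combination (-x * normalPDF x * normalPDF G) * hs2
    + (normalPDF x * normalPDF G * ρ) * hcond

lemma tendsto_bivariatePDF_atBot_fst (b : ℝ) :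
    Tendsto (fun x => bivariatePDF ρ (x, b)) atBot (𝓝 0) := by
  have hle (x : ℝ) : bivariatePDF ρ (x, b) ≤ normalPDF x / √(1 - ρ ^ 2) := by
    rw [bivariatePDF_eq hρ]
    gcongr
    exact mul_le_of_le_one_right (normalPDF_pos x).le (normalPDF_le_one _)
  exact tendsto_of_tendsto_of_tendsto_of_le_of_le tendsto_const_nhds
    (by simpa using tendsto_normalPDF_atBot.div_const √(1 - ρ ^ 2))
    (fun x => (bivariatePDF_pos hρ _).le) hle

lemma norm_derivIntegrand_le (b x : ℝ) {m : ℝ} (hm : 0 < m) (hms : m ≤ √(1 - ρ ^ 2)) :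
    ‖derivIntegrand b ρ x‖ ≤ normalPDF x * ((|b| + |x|) / m ^ 3) := by
  have hs := sqrt_one_sub_sq_pos hρ
  have hnum : |ρ * b - x| ≤ |b| + |x| := by
    have : |ρ| ≤ 1 := abs_le.2 ⟨hρ.1.le, hρ.2.le⟩
    calc |ρ * b - x| ≤ |ρ| * |b| + |x| := by rw [← abs_mul]; exact abs_sub _ _
      _ ≤ |b| + |x| := by gcongr; exact mul_le_of_le_one_left (abs_nonneg b) this
  rw [derivIntegrand, Real.norm_eq_abs, abs_mul, abs_mul, abs_div, abs_of_pos (normalPDF_pos _),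
    abs_of_pos (normalPDF_pos _), abs_of_pos (pow_pos hs 3)]
  refine mul_le_mul_of_nonneg_left ?_ (normalPDF_pos x).le
  calc normalPDF (condArg b ρ x) * (|ρ * b - x| / √(1 - ρ ^ 2) ^ 3)
      ≤ 1 * (|ρ * b - x| / √(1 - ρ ^ 2) ^ 3) := by gcongr; exact normalPDF_le_one _
    _ ≤ (|b| + |x|) / m ^ 3 := by rw [one_mul]; gcongr

lemma integral_Iic_derivIntegrand (a b : ℝ) :
    ∫ x in Iic a, derivIntegrand b ρ x = bivariatePDF ρ (a, b) := by
  have hint : IntegrableOn (derivIntegrand b ρ) (Iic a) :=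
    (integrable_normalPDF_mul_abs_add_abs b _).integrableOn.mono'
      (continuous_derivIntegrand b ρ).aestronglyMeasurable
      (Eventually.of_forall fun x =>
        norm_derivIntegrand_le hρ b x (sqrt_one_sub_sq_pos hρ) le_rfl)
  rw [integral_Iic_of_hasDerivAt_of_tendsto' (fun x _ => hasDerivAt_bivariatePDF_fst hρ b x) hint
    (tendsto_bivariatePDF_atBot_fst hρ b), sub_zero]

end Correlation

lemma hasDerivAt_Phi2 (a b : ℝ) {ρ₀ : ℝ} (hρ₀ : ρ₀ ∈ Ioo (-1 : ℝ) 1) :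
    HasDerivAt (fun ρ => Phi2 a b ρ) (bivariatePDF ρ₀ (a, b)) ρ₀ := by
  have habs : |ρ₀| < 1 := abs_lt.2 hρ₀
  set ε := (1 - |ρ₀|) / 2 with hε
  have hεpos : 0 < ε := by linarith
  have hball : ∀ ρ ∈ Metric.ball ρ₀ ε, ρ ∈ Ioo (-1 : ℝ) 1 ∧ ε ≤ √(1 - ρ ^ 2) := by
    intro ρ hρ
    rw [Metric.mem_ball, Real.dist_eq] at hρ
    have hρ1 : |ρ| < 1 - ε := by linarith [abs_sub_abs_le_abs_sub ρ ρ₀]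
    exact ⟨abs_lt.1 (by linarith), by linarith [one_sub_abs_le_sqrt_one_sub_sq (by linarith)]⟩
  have hmeas (ρ : ℝ) : AEStronglyMeasurable (fun x => normalPDF x * normalCDF (condArg b ρ x))
      (volume.restrict (Iic a)) :=
    (continuous_normalPDF.mul
      (continuous_normalCDF.comp (continuous_condArg b ρ))).aestronglyMeasurable
  have hint : IntegrableOn (fun x => normalPDF x * normalCDF (condArg b ρ₀ x)) (Iic a) :=
    integrable_normalPDF.integrableOn.mono' (hmeas ρ₀) (Eventually.of_forall fun x => by
      rw [norm_mul, Real.norm_of_nonneg (normalPDF_pos x).le,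
        Real.norm_of_nonneg (normalCDF_nonneg _)]
      exact mul_le_of_le_one_right (normalPDF_pos x).le (normalCDF_le_one _))
  have hderiv := (hasDerivAt_integral_of_dominated_loc_of_deriv_le
    (Metric.ball_mem_nhds ρ₀ hεpos) (Eventually.of_forall hmeas) hint
    (continuous_derivIntegrand b ρ₀).aestronglyMeasurable
    (Eventually.of_forall fun x ρ hρ =>
      norm_derivIntegrand_le (hball ρ hρ).1 b x hεpos (hball ρ hρ).2)
    (integrable_normalPDF_mul_abs_add_abs b _).integrableOn
    (Eventually.of_forall fun x ρ hρ =>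
      hasDerivAt_normalPDF_mul_normalCDF_condArg (hball ρ hρ).1 b x)).2
  rw [integral_Iic_derivIntegrand hρ₀] at hderiv
  refine hderiv.congr_of_eventuallyEq ?_
  filter_upwards [Ioo_mem_nhds hρ₀.1 hρ₀.2] with ρ hρ using Phi2_coe_coe hρ a b

lemma Phi2_strictMonoOn (a b : ℝ) : StrictMonoOn (Phi2 a b) (Ioo (-1 : ℝ) 1) := by
  refine strictMonoOn_of_hasDerivWithinAt_pos (convex_Ioo _ _)
    (fun ρ hρ => (hasDerivAt_Phi2 a b hρ).continuousAt.continuousWithinAt)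
    (fun ρ hρ => (hasDerivAt_Phi2 a b ?_).hasDerivWithinAt) (fun ρ hρ => bivariatePDF_pos ?_ _)
  all_goals rwa [interior_Ioo] at hρ

lemma sum_Icc_mul_sub_mul_eq {R : Type*} [CommRing R] (p c : ℕ → R) (n : ℕ) :
    ∑ r ∈ Finset.Icc 1 n, (p r * c (r + 1) - c r * p (r + 1))
      = ∑ r ∈ Finset.Icc 1 n, p r * (c (r + 1) - c (r - 1)) + c 0 * p 1 - c n * p (n + 1) := by
  induction n with
  | zero => simp
  | succ n ih =>
    rw [Finset.sum_Icc_succ_top (by omega), Finset.sum_Icc_succ_top (by omega), ih,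
      Nat.add_sub_cancel]
    ring

/-- the ordinal–binary bridging function `F_ob` is strictly increasing
on `(−1, 1)` (invertibility, Theorem 2). -/
theorem Fob_strictMono
    (l : ℕ) (hl : 2 ≤ l) (Δ : ℕ → EReal)
    (hΔ0 : Δ 0 = ⊥) (hΔl : Δ l = ⊤) (hΔmono : ∀ m < l, Δ m < Δ (m + 1))
    (Δb : ℝ) :
    StrictMonoOn (fun ρ : ℝ =>
        2 * ∑ r ∈ Finset.Icc 1 (l - 1),
          (Phi2 (Δ r) (Δb : EReal) ρ * stdPhi (Δ (r + 1))
            - stdPhi (Δ r) * Phi2 (Δ (r + 1)) (Δb : EReal) ρ))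
      (Set.Ioo (-1 : ℝ) 1) := by
  have hstep : ∀ r ∈ Finset.Icc 1 (l - 1), Δ (r - 1) < Δ r ∧ Δ r < Δ (r + 1) := by
    intro r hr
    rw [Finset.mem_Icc] at hr
    refine ⟨?_, hΔmono r (by omega)⟩
    simpa [Nat.sub_add_cancel hr.1] using hΔmono (r - 1) (by omega)
  have hsum : ∀ ρ ∈ Ioo (-1 : ℝ) 1,
      ∑ r ∈ Finset.Icc 1 (l - 1),
          (Phi2 (Δ r) Δb ρ * stdPhi (Δ (r + 1)) - stdPhi (Δ r) * Phi2 (Δ (r + 1)) Δb ρ)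
        = ∑ r ∈ Finset.Icc 1 (l - 1), Phi2 (Δ r) Δb ρ * (stdPhi (Δ (r + 1)) - stdPhi (Δ (r - 1)))
          - stdPhi (Δ (l - 1)) * normalCDF Δb := by
    intro ρ hρ
    rw [sum_Icc_mul_sub_mul_eq (fun r => Phi2 (Δ r) Δb ρ) (fun r => stdPhi (Δ r)),
      Nat.sub_add_cancel (by omega), hΔ0, hΔl, stdPhi_bot, Phi2_top_left hρ, zero_mul, add_zero]
  intro ρ₁ hρ₁ ρ₂ hρ₂ hlt
  simp only [hsum ρ₁ hρ₁, hsum ρ₂ hρ₂]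
  refine mul_lt_mul_of_pos_left (sub_lt_sub_right (Finset.sum_lt_sum_of_nonempty
    ⟨1, Finset.mem_Icc.2 ⟨le_rfl, by omega⟩⟩ fun r hr => ?_) _) two_pos
  obtain ⟨hlo, hhi⟩ := hstep r hr
  rw [← EReal.coe_toReal hhi.ne_top hlo.ne_bot]
  exact mul_lt_mul_of_pos_right (Phi2_strictMonoOn _ Δb hρ₁ hρ₂ hlt)
    (sub_pos.2 (stdPhi_strictMono (hlo.trans hhi)))
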